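/- Let G be a finite non-cyclic group and C an inclusion-minimal generating set of G. If every edge of the Cayley graph Cay(G, C) lies in a triangle, then every element of C has order 3. -/

import Mathlib

/-!
A triangle through the edge `{1, c}` of `Cay(G, C)` has a third vertex `x = d'` with
`x = c * e'`, where `d' ∈ {d, d⁻¹}`, `e' ∈ {e, e⁻¹}` and `d, e ∈ C`. The relation
`c = d' * e'⁻¹` puts each of `c, d, e` in the subgroup generated by the other two, and since
no element of a minimal generating set lies in the subgroup generated by the others,
`c = d = e`. Then `x ≠ 1` and `x ≠ c` leave only `c⁻¹ = c * c`, so `c` has order `3`.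
-/

/-- The undirected simple Cayley graph of a semigroup `S` with connection set `C`. -/
def cayleyGraph (S : Type*) [Semigroup S] (C : Set S) : SimpleGraph S where
  Adj a b := a ≠ b ∧ ∃ c ∈ C, (a * c = b ∨ b * c = a)
  symm := ⟨by
    rintro a b ⟨hne, c, hc, h⟩
    exact ⟨hne.symm, c, hc, h.symm⟩⟩
  loopless := ⟨fun a h => h.1 rfl⟩

variable {G : Type*} [Group G]

theorem Subgroup.mem_iff_of_eq_or_eq_inv {H : Subgroup G} {a a' : G} (h : a' = a ∨ a' = a⁻¹) :
    a' ∈ H ↔ a ∈ H := by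
  rcases h with rfl | rfl <;> simp

theorem exists_eq_mul_of_cayleyGraph_adj {C : Set G} {a b : G} (h : (cayleyGraph G C).Adj a b) :
    ∃ c ∈ C, ∃ c', (c' = c ∨ c' = c⁻¹) ∧ b = a * c' := by
  obtain ⟨-, c, hc, h | h⟩ := h
  · exact ⟨c, hc, c, Or.inl rfl, h.symm⟩
  · exact ⟨c, hc, c⁻¹, Or.inr rfl, by rw [← h, mul_inv_cancel_right]⟩

def IsIrredundant (C : Set G) : Prop :=
  ∀ a ∈ C, a ∉ Subgroup.closure (C \ {a})

theorem isIrredundant_of_minimal {C : Set G} (hgen : Subgroup.closure C = ⊤)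
    (hmin : ∀ C' ⊂ C, Subgroup.closure C' ≠ ⊤) : IsIrredundant C := by
  intro a ha hmem
  refine hmin _ (Set.sdiff_singleton_ssubset.mpr ha) (eq_top_iff.mpr ?_)
  rw [← hgen, Subgroup.closure_le]
  intro y hy
  by_cases hya : y = a
  · exact hya ▸ hmem
  · exact Subgroup.subset_closure ⟨hy, hya⟩

namespace IsIrredundant

variable {C : Set G}

theorem one_notMem (hC : IsIrredundant C) : (1 : G) ∉ C :=
  fun h => hC 1 h (one_mem _)

theorem eq_or_eq_of_mem_closure_pair (hC : IsIrredundant C) {a b c : G} (ha : a ∈ C)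
    (hb : b ∈ C) (hc : c ∈ C) (h : a ∈ Subgroup.closure {b, c}) : a = b ∨ a = c := by
  by_contra! hne
  refine hC a ha (Subgroup.closure_mono (Set.pair_subset ?_ ?_) h)
  · exact Set.mem_sdiff_singleton.2 ⟨hb, hne.1.symm⟩
  · exact Set.mem_sdiff_singleton.2 ⟨hc, hne.2.symm⟩

theorem eq_of_eq_mul (hC : IsIrredundant C) {c d e d' e' : G} (hc : c ∈ C) (hd : d ∈ C)
    (he : e ∈ C) (hd' : d' = d ∨ d' = d⁻¹) (he' : e' = e ∨ e' = e⁻¹) (h : c = d' * e') :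
    c = d ∧ c = e := by
  have hc_mem : c ∈ Subgroup.closure {d, e} := h ▸ mul_mem
    ((Subgroup.mem_iff_of_eq_or_eq_inv hd').2 (Subgroup.subset_closure (by simp)))
    ((Subgroup.mem_iff_of_eq_or_eq_inv he').2 (Subgroup.subset_closure (by simp)))
  have hd_mem : d ∈ Subgroup.closure {c, e} := by
    refine (Subgroup.mem_iff_of_eq_or_eq_inv hd').1 ?_
    refine (Subgroup.mul_mem_cancel_right _ ?_).1
      (by rw [← h]; exact Subgroup.subset_closure (by simp))
    exact (Subgroup.mem_iff_of_eq_or_eq_inv he').2 (Subgroup.subset_closure (by simp))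
  have he_mem : e ∈ Subgroup.closure {c, d} := by
    refine (Subgroup.mem_iff_of_eq_or_eq_inv he').1 ?_
    refine (Subgroup.mul_mem_cancel_left _ ?_).1
      (by rw [← h]; exact Subgroup.subset_closure (by simp))
    exact (Subgroup.mem_iff_of_eq_or_eq_inv hd').2 (Subgroup.subset_closure (by simp))
  have := hC.eq_or_eq_of_mem_closure_pair hc hd he hc_mem
  have := hC.eq_or_eq_of_mem_closure_pair hd hc he hd_mem
  have := hC.eq_or_eq_of_mem_closure_pair he hc hd he_mem
  grind

end IsIrredundant

theorem minimal_gens_triangle_order_three_general {G : Type} [Group G]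
    (C : Set G)
    (hgen : Subgroup.closure C = ⊤)
    (hmin : ∀ C' ⊂ C, Subgroup.closure C' ≠ ⊤)
    (htri : ∀ a b : G, (cayleyGraph G C).Adj a b →
      ∃ x : G, (cayleyGraph G C).Adj a x ∧ (cayleyGraph G C).Adj b x) :
    ∀ c ∈ C, orderOf c = 3 := by
  intro c hc
  have hC := isIrredundant_of_minimal hgen hmin
  have hc1 : c ≠ 1 := fun h => hC.one_notMem (h ▸ hc)
  obtain ⟨x, h1x, hcx⟩ := htri 1 c ⟨hc1.symm, c, hc, Or.inl (one_mul c)⟩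
  obtain ⟨d, hd, d', hd', hxd⟩ := exists_eq_mul_of_cayleyGraph_adj h1x
  rw [one_mul] at hxd
  subst hxd
  obtain ⟨e, he, e', he', hxe⟩ := exists_eq_mul_of_cayleyGraph_adj hcx
  have he'_inv : e'⁻¹ = e ∨ e'⁻¹ = e⁻¹ := by rcases he' with rfl | rfl <;> simp
  obtain ⟨rfl, rfl⟩ :=
    hC.eq_of_eq_mul hc hd he hd' he'_inv (by rw [hxe, mul_inv_cancel_right])
  have hx : x = c⁻¹ := hd'.resolve_left hcx.ne.symm
  have he'c : e' = c := he'.resolve_right fun h => h1x.ne (by rw [hxe, h, mul_inv_cancel])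
  have hinv : c⁻¹ = c * c := hx ▸ he'c ▸ hxe
  exact orderOf_eq_prime (by rw [pow_succ, sq, ← hinv, inv_mul_cancel]) hc1

/-- if `G` is a finite non-cyclic group and `C` is an
inclusion-minimal generating set such that every edge of `Cay(G, C)` lies in a
triangle, then every element of `C` has order 3. -/
theorem minimal_gens_triangle_order_three {G : Type} [Group G] [Fintype G]
    (hnc : ¬ IsCyclic G) (C : Set G)
    (hgen : Subgroup.closure C = ⊤)
    (hmin : ∀ C' ⊂ C, Subgroup.closure C' ≠ ⊤)
    (htri : ∀ a b : G, (cayleyGraph G C).Adj a b →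
      ∃ x : G, (cayleyGraph G C).Adj a x ∧ (cayleyGraph G C).Adj b x) :
    ∀ c ∈ C, orderOf c = 3 :=
  minimal_gens_triangle_order_three_general C hgen hmin htri
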